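/- For a Hermitian matrix H on ℂ^{2^n} with Tr(H²) ≤ 1, the twirled quantity E_{C∼μ}[Tr((Tr_{[2,n]}(C H C†))²)] ≥ ((3/2)/(2^n − 2^{−n})) Tr(H²) whenever μ is an exact unitary 2-design (e.g., the uniform measure on the n-qubit Clifford group). -/

import Mathlib

/-!
Let `T = E_{U∼μH} (U ⊗ U) X (U ⊗ U)†` be the twirl of `X` over the left-invariant measure `μH`.
Left invariance makes `T` commute with every `V ⊗ V`. Testing this against diagonal phases,
permutation matrices and one real reflection shows `T = y • 1 + z • F`, with `F` the swap of the
two tensor factors; `Tr T = Tr X` and `Tr (T F) = Tr (X F)` then determine `y` and `z`.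
The moment hypothesis says that `μ` has the same twirl. Since
`Tr ((Tr_{[2,n]} A)²) = Tr ((A ⊗ A) S)`, with `S` the swap of the first qubits of the two copies,
the expectation is `y Tr S + z Tr (F S)` for `X = H ⊗ H`. With `d = 2^n` this works out to
`(3/2)/(d - 1/d) Tr(H²) + (d²/2 - 2)/(d² - 1) Tr(H)²`, whose last term is nonnegative when `H` is
Hermitian.
-/
open MeasureTheory
noncomputable section

abbrev Qub (n : ℕ) := Fin n → Fin 2

instance {n : ℕ} : MeasurableSpace (Matrix (Qub n) (Qub n) ℂ) := borel _

abbrev UGQ (n : ℕ) := Matrix.unitaryGroup (Qub n) ℂ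

/-- Partial trace over qubits `2,…,n`, leaving an operator on the first qubit. -/
def ptr (m : ℕ) (M : Matrix (Qub (m + 1)) (Qub (m + 1)) ℂ) : Matrix (Fin 2) (Fin 2) ℂ :=
  fun a b => ∑ g : Qub (m + 1),
    if g 0 = 0 then M (Function.update g 0 a) (Function.update g 0 b) else 0

/-- `t`-th moment matrix `∫ U^{⊗t} ⊗ conj(U)^{⊗t} dν`. -/
def momentMatrix {n : ℕ} (ν : Measure (UGQ n)) (t : ℕ) :
    Matrix ((Fin t → Qub n) × (Fin t → Qub n)) ((Fin t → Qub n) × (Fin t → Qub n)) ℂ :=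
  fun p q => ∫ U, (∏ k, (U : Matrix (Qub n) (Qub n) ℂ) (p.1 k) (q.1 k))
      * (starRingEnd ℂ) (∏ k, (U : Matrix (Qub n) (Qub n) ℂ) (p.2 k) (q.2 k)) ∂ν

open scoped Kronecker Matrix
open Matrix

section UnitaryGroup

variable {ι : Type*} [Fintype ι] [DecidableEq ι]

theorem isCompact_unitaryGroup {𝕜 : Type*} [RCLike 𝕜] :
    IsCompact (unitaryGroup ι 𝕜 : Set (Matrix ι ι 𝕜)) := by
  have hclosed : IsClosed (unitaryGroup ι 𝕜 : Set (Matrix ι ι 𝕜)) := by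
    have : (unitaryGroup ι 𝕜 : Set (Matrix ι ι 𝕜)) = {U | U * star U = 1} := by
      ext U
      exact mem_unitaryGroup_iff
    rw [this]
    exact isClosed_eq (continuous_id.matrix_mul continuous_id.star) continuous_const
  refine (isCompact_univ_pi fun _ => isCompact_univ_pi fun _ =>
    isCompact_closedBall (0 : 𝕜) 1).of_isClosed_subset hclosed ?_
  intro U hU
  simpa using fun i j => entry_norm_bound_of_unitary hU i j

instance {𝕜 : Type*} [RCLike 𝕜] : CompactSpace (unitaryGroup ι 𝕜) :=
  isCompact_iff_compactSpace.mp isCompact_unitaryGroup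

variable {R : Type*} [CommRing R] [StarRing R]

theorem kronecker_mem_unitaryGroup {U V : Matrix ι ι R} (hU : U ∈ unitaryGroup ι R)
    (hV : V ∈ unitaryGroup ι R) : U ⊗ₖ V ∈ unitaryGroup (ι × ι) R := by
  rw [mem_unitaryGroup_iff, star_eq_conjTranspose, conjTranspose_kronecker, ← mul_kronecker_mul,
    ← star_eq_conjTranspose, ← star_eq_conjTranspose, mem_unitaryGroup_iff.mp hU,
    mem_unitaryGroup_iff.mp hV, one_kronecker_one]

theorem permMatrix_mem_unitaryGroup (σ : Equiv.Perm ι) : σ.permMatrix R ∈ unitaryGroup ι R := by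
  rw [mem_unitaryGroup_iff, star_eq_conjTranspose, conjTranspose_permMatrix, ← permMatrix_mul,
    inv_mul_cancel, permMatrix_one]

theorem diagonal_mem_unitaryGroup {d : ι → R} (hd : ∀ i, d i * star (d i) = 1) :
    diagonal d ∈ unitaryGroup ι R := by
  rw [mem_unitaryGroup_iff, star_eq_conjTranspose, diagonal_conjTranspose, diagonal_mul_diagonal,
    ← diagonal_one]
  exact congrArg diagonal (funext hd)

theorem one_sub_smul_vecMulVec_mem_unitaryGroup (w : ι → ℂ) {c : ℝ}
    (hc : (c : ℂ) * (star w ⬝ᵥ w) = 2) :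
    1 - (c : ℂ) • vecMulVec w (star w) ∈ unitaryGroup ι ℂ := by
  set P := vecMulVec w (star w)
  have hstar : star P = P := by
    rw [star_eq_conjTranspose, conjTranspose_vecMulVec, star_star]
  have hP : P * P = (star w ⬝ᵥ w) • P := by
    rw [vecMulVec_mul_vecMulVec, vecMulVec_smul]
  rw [mem_unitaryGroup_iff, star_sub, star_one, star_smul, hstar, Complex.star_def,
    Complex.conj_ofReal]
  simp only [sub_mul, mul_sub, one_mul, mul_one, smul_mul_smul_comm, hP]
  linear_combination (norm := module) (c : ℂ) • hc • P

end UnitaryGroup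

theorem Equiv.Perm.exists_apply_eq_and_apply_eq {α : Type*} [DecidableEq α] {a b c d : α}
    (hab : a ≠ b) (hcd : c ≠ d) : ∃ σ : Equiv.Perm α, σ a = c ∧ σ b = d := by
  refine ⟨(Equiv.swap a c).trans (Equiv.swap (Equiv.swap a c b) d), ?_, ?_⟩
  · have hb : Equiv.swap a c b ≠ c := by
      simpa using (Equiv.swap a c).injective.ne hab.symm
    simp only [Equiv.trans_apply, Equiv.swap_apply_left]
    exact Equiv.swap_apply_of_ne_of_ne hb.symm hcd
  · simp only [Equiv.trans_apply, Equiv.swap_apply_left]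

section SwapMatrix

variable {ι : Type*} [DecidableEq ι]

variable (ι) in
def swapMatrix : Matrix (ι × ι) (ι × ι) ℂ := of fun p q => if p.swap = q then 1 else 0

@[simp] theorem swapMatrix_apply (p q : ι × ι) :
    swapMatrix ι p q = if p.swap = q then 1 else 0 := rfl

variable [Fintype ι]

theorem swapMatrix_mul_apply (M : Matrix (ι × ι) (ι × ι) ℂ) (p q : ι × ι) :
    (swapMatrix ι * M) p q = M p.swap q := by
  simp [mul_apply]

theorem mul_swapMatrix_apply (M : Matrix (ι × ι) (ι × ι) ℂ) (p q : ι × ι) :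
    (M * swapMatrix ι) p q = M p q.swap := by
  simp [mul_apply, Prod.swap_eq_iff_eq_swap]

theorem swapMatrix_mul_kronecker (A B : Matrix ι ι ℂ) :
    swapMatrix ι * A ⊗ₖ B = B ⊗ₖ A * swapMatrix ι := by
  ext p q
  rw [swapMatrix_mul_apply, mul_swapMatrix_apply, kroneckerMap_apply, kroneckerMap_apply, mul_comm]
  rfl

theorem swapMatrix_mul_self : swapMatrix ι * swapMatrix ι = 1 := by
  ext p q
  simp [swapMatrix_mul_apply, one_apply]

theorem trace_swapMatrix : (swapMatrix ι).trace = Fintype.card ι := by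
  simp only [trace, diag, swapMatrix_apply, Fintype.sum_prod_type, Prod.swap_prod_mk,
    Prod.mk.injEq]
  simp [Finset.sum_ite_eq, eq_comm]

theorem trace_kronecker_mul_swapMatrix (A B : Matrix ι ι ℂ) :
    (A ⊗ₖ B * swapMatrix ι).trace = (A * B).trace := by
  simp only [trace, diag, mul_swapMatrix_apply, kroneckerMap_apply, Fintype.sum_prod_type,
    Prod.swap_prod_mk]
  simp only [mul_apply]

end SwapMatrix

section ConjKronecker

variable {ι : Type*} [Fintype ι] [DecidableEq ι]

def conjKronecker (U : Matrix ι ι ℂ) (X : Matrix (ι × ι) (ι × ι) ℂ) : Matrix (ι × ι) (ι × ι) ℂ :=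
  U ⊗ₖ U * X * (U ⊗ₖ U)ᴴ

omit [DecidableEq ι] in
theorem conjKronecker_apply (A : Matrix ι ι ℂ) (X : Matrix (ι × ι) (ι × ι) ℂ) (x y : ι × ι) :
    conjKronecker A X x y =
      ∑ a, ∑ b, A x.1 a.1 * A x.2 a.2 * X a b * star (A y.1 b.1 * A y.2 b.2) := by
  simp only [conjKronecker, mul_apply, kroneckerMap_apply, conjTranspose_apply, Finset.sum_mul]
  rw [Finset.sum_comm]

theorem conjKronecker_diagonal_apply (d : ι → ℂ) (X : Matrix (ι × ι) (ι × ι) ℂ) (x y : ι × ι) :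
    conjKronecker (diagonal d) X x y = d x.1 * d x.2 * X x y * star (d y.1 * d y.2) := by
  rw [conjKronecker, diagonal_kronecker_diagonal, diagonal_conjTranspose, mul_diagonal,
    diagonal_mul]
  rfl

omit [DecidableEq ι] in
theorem conjKronecker_mul (U V : Matrix ι ι ℂ) (X : Matrix (ι × ι) (ι × ι) ℂ) :
    conjKronecker (U * V) X = conjKronecker U (conjKronecker V X) := by
  simp only [conjKronecker, mul_kronecker_mul, conjTranspose_mul, Matrix.mul_assoc]

theorem trace_conjKronecker_mul {U : Matrix ι ι ℂ} (hU : U ∈ unitaryGroup ι ℂ)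
    {W : Matrix (ι × ι) (ι × ι) ℂ} (hW : Commute (U ⊗ₖ U) W) (X : Matrix (ι × ι) (ι × ι) ℂ) :
    (conjKronecker U X * W).trace = (X * W).trace := by
  have hK := kronecker_mem_unitaryGroup hU hU
  rw [conjKronecker, trace_mul_cycle, ← Matrix.mul_assoc, ← hW.eq, Matrix.mul_assoc,
    trace_mul_cycle, Matrix.mul_assoc X, ← star_eq_conjTranspose,
    mem_unitaryGroup_iff'.mp hK, Matrix.mul_one]

end ConjKronecker

section Commutant

variable {ι : Type*} [Fintype ι] [DecidableEq ι]

def IsConjKroneckerInvariant (T : Matrix (ι × ι) (ι × ι) ℂ) : Prop :=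
  ∀ V ∈ unitaryGroup ι ℂ, conjKronecker V T = T

omit [Fintype ι] in
def pairCount (e : ι) (x : ι × ι) : ℕ := (if x.1 = e then 1 else 0) + (if x.2 = e then 1 else 0)

omit [Fintype ι] in
theorem exists_pairCount_ne {x y : ι × ι} (hx : y ≠ x) (hs : y ≠ x.swap) :
    ∃ e, pairCount e x ≠ pairCount e y := by
  by_contra! h
  have h₁ := h y.1
  have h₂ := h y.2
  have h₃ := h x.1
  obtain ⟨x₁, x₂⟩ := x
  obtain ⟨y₁, y₂⟩ := y
  simp only [pairCount, Prod.mk.injEq, Prod.swap_prod_mk, ne_eq] at *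
  split_ifs at h₁ h₂ h₃ <;> grind

namespace IsConjKroneckerInvariant

variable {T : Matrix (ι × ι) (ι × ι) ℂ} (hT : IsConjKroneckerInvariant T)
include hT

theorem apply_eq_zero {x y : ι × ι} (hx : y ≠ x) (hs : y ≠ x.swap) : T x y = 0 := by
  obtain ⟨e, he⟩ := exists_pairCount_ne hx hs
  have hphase : diagonal (fun j => if j = e then Complex.I else 1) ∈ unitaryGroup ι ℂ :=
    diagonal_mem_unitaryGroup fun j => by split_ifs <;> simp
  -- conjugating by this phase multiplies `T x y` by `I ^ pairCount e x * (-I) ^ pairCount e y`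
  have key := congrFun (congrFun (hT _ hphase) x) y
  rw [conjKronecker_diagonal_apply] at key
  unfold pairCount at he
  split_ifs at key he <;> simp [Complex.ext_iff] at key he ⊢ <;> constructor <;> linarith

theorem apply_map_perm (σ : Equiv.Perm ι) (x y : ι × ι) :
    T (Prod.map σ σ x) (Prod.map σ σ y) = T x y := by
  have h := congrFun (congrFun (hT _ (permMatrix_mem_unitaryGroup σ.symm)) (Prod.map σ σ x))
    (Prod.map σ σ y)
  rw [← h, conjKronecker_apply]
  simp [Fintype.sum_prod_type, ite_mul, mul_ite, apply_ite (starRingEnd ℂ)]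

theorem apply_diag_eq_add {e f : ι} (hef : e ≠ f) :
    T (e, e) (e, e) = T (e, f) (e, f) + T (e, f) (f, e) := by
  set w : ι → ℂ := fun j => if j = e then 1 else if j = f then -2 else 0
  have hw : ((2 / 5 : ℝ) : ℂ) * (star w ⬝ᵥ w) = 2 := by
    rw [dotProduct, Fintype.sum_eq_add e f hef fun j hj => by simp [w, hj.1, hj.2]]
    simp [w, hef.symm]
    norm_num
  have hR : ∀ a, (1 - ((2 / 5 : ℝ) : ℂ) • vecMulVec w (star w)) e a =
      if a = e then 3 / 5 else if a = f then 4 / 5 else 0 := by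
    intro a
    by_cases hae : a = e
    · subst hae
      simp [w, vecMulVec_apply]
      norm_num
    · by_cases haf : a = f
      · subst haf
        simp [w, vecMulVec_apply, hef, hae]
        norm_num
      · simp [w, vecMulVec_apply, hae, haf, one_apply, Ne.symm hae]
  -- the reflection along `e - 2 f` is not monomial: its row `e` is `3/5` at `e` and `4/5` at `f`
  have key := congrFun (congrFun (hT _ (one_sub_smul_vecMulVec_mem_unitaryGroup w hw)) (e, e))
    (e, e)
  rw [conjKronecker_apply] at key
  simp only [hR, Fintype.sum_prod_type] at key
  simp (disch := intro j hj; simp [hj.1, hj.2]) only [Fintype.sum_eq_add e f hef] at key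
  simp (disch := simp [hef, hef.symm]) only [if_true, if_neg hef, if_neg hef.symm,
    hT.apply_eq_zero] at key
  have hff := hT.apply_map_perm (Equiv.swap e f) (e, e) (e, e)
  have hfe := hT.apply_map_perm (Equiv.swap e f) (e, f) (e, f)
  have hfe' := hT.apply_map_perm (Equiv.swap e f) (e, f) (f, e)
  simp only [Prod.map, Equiv.swap_apply_left, Equiv.swap_apply_right] at hff hfe hfe'
  rw [hff, hfe, hfe'] at key
  norm_num at key
  linear_combination (-625 / 288 : ℂ) * key

theorem eq_smul_one_add_smul_swapMatrix {e f : ι} (hef : e ≠ f) :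
    T = T (e, f) (e, f) • 1 + T (e, f) (f, e) • swapMatrix ι := by
  ext x y
  obtain ⟨x₁, x₂⟩ := x
  simp only [Matrix.add_apply, Matrix.smul_apply, one_apply, swapMatrix_apply, Prod.swap_prod_mk,
    smul_eq_mul, mul_ite, mul_one, mul_zero]
  by_cases hx : x₁ = x₂
  · subst hx
    by_cases hy : (x₁, x₁) = y
    · subst hy
      have := hT.apply_map_perm (Equiv.swap x₁ e) (x₁, x₁) (x₁, x₁)
      simp only [Prod.map, Equiv.swap_apply_left] at this
      rw [← this, hT.apply_diag_eq_add hef, if_pos rfl, if_pos rfl]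
    · rw [if_neg hy, if_neg hy, add_zero, hT.apply_eq_zero (Ne.symm hy) (Ne.symm hy)]
  · obtain ⟨σ, h₁, h₂⟩ := Equiv.Perm.exists_apply_eq_and_apply_eq hx hef
    by_cases hy : (x₁, x₂) = y
    · subst hy
      have := hT.apply_map_perm σ (x₁, x₂) (x₁, x₂)
      simp only [Prod.map, h₁, h₂] at this
      simp [this, Ne.symm hx]
    by_cases hs : (x₂, x₁) = y
    · subst hs
      have := hT.apply_map_perm σ (x₁, x₂) (x₂, x₁)
      simp only [Prod.map, h₁, h₂] at this
      simp [this, hx]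
    rw [if_neg hy, if_neg hs, add_zero, hT.apply_eq_zero (Ne.symm hy) (Ne.symm hs)]

end IsConjKroneckerInvariant

end Commutant

theorem Continuous.matrix_kronecker {X R l m n p : Type*} [TopologicalSpace X] [TopologicalSpace R]
    [Mul R] [ContinuousMul R] {A : X → Matrix l m R} {B : X → Matrix n p R}
    (hA : Continuous A) (hB : Continuous B) : Continuous fun x => A x ⊗ₖ B x :=
  continuous_pi fun _ => continuous_pi fun _ => (hA.matrix_elem _ _).mul (hB.matrix_elem _ _)

theorem Continuous.integrable_of_compactSpace {X E : Type*} [TopologicalSpace X] [CompactSpace X]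
    [MeasurableSpace X] [OpensMeasurableSpace X] {μ : Measure X} [IsFiniteMeasure μ]
    [NormedAddCommGroup E] {f : X → E} (hf : Continuous f) : Integrable f μ :=
  hf.integrable_of_hasCompactSupport (HasCompactSupport.of_compactSpace f)

theorem mul_of_integral_mul_apply {α 𝕜 l m n k : Type*} [RCLike 𝕜] [Fintype m] [Fintype n]
    [MeasurableSpace α] {μ : Measure α} {F : α → Matrix m n 𝕜}
    (hF : ∀ i j, Integrable (fun x => F x i j) μ) (A : Matrix l m 𝕜) (B : Matrix n k 𝕜)
    (p : l) (q : k) :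
    (A * of (fun i j => ∫ x, F x i j ∂μ) * B) p q = ∫ x, (A * F x * B) p q ∂μ := by
  simp only [mul_apply, of_apply, Finset.sum_mul]
  rw [integral_finsetSum _ fun i _ => integrable_finsetSum _ fun j _ =>
    ((hF j i).const_mul _).mul_const _]
  refine Finset.sum_congr rfl fun i _ => ?_
  rw [integral_finsetSum _ fun j _ => ((hF j i).const_mul _).mul_const _]
  refine Finset.sum_congr rfl fun j _ => ?_
  rw [integral_mul_const, integral_const_mul]

section Twirl

variable {ι : Type*} [Fintype ι] [DecidableEq ι]
  [MeasurableSpace (Matrix ι ι ℂ)] [BorelSpace (Matrix ι ι ℂ)]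

def twirl (ν : Measure (unitaryGroup ι ℂ)) (X : Matrix (ι × ι) (ι × ι) ℂ) :
    Matrix (ι × ι) (ι × ι) ℂ :=
  of fun p q => ∫ U : unitaryGroup ι ℂ, conjKronecker (U : Matrix ι ι ℂ) X p q ∂ν

variable {ν : Measure (unitaryGroup ι ℂ)} [IsFiniteMeasure ν] (X : Matrix (ι × ι) (ι × ι) ℂ)

omit [MeasurableSpace (Matrix ι ι ℂ)] [BorelSpace (Matrix ι ι ℂ)] in
theorem continuous_conjKronecker :
    Continuous fun U : unitaryGroup ι ℂ => conjKronecker (U : Matrix ι ι ℂ) X := by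
  have hU := continuous_subtype_val.matrix_kronecker
    (continuous_subtype_val (p := (· ∈ unitaryGroup ι ℂ)))
  exact (hU.matrix_mul continuous_const).matrix_mul hU.matrix_conjTranspose

theorem integrable_conjKronecker_apply (p q : ι × ι) :
    Integrable (fun U : unitaryGroup ι ℂ => conjKronecker (U : Matrix ι ι ℂ) X p q) ν :=
  ((continuous_conjKronecker X).matrix_elem p q).integrable_of_compactSpace

theorem isConjKroneckerInvariant_twirl (hinv : ∀ g, Measure.map (g * ·) ν = ν) :
    IsConjKroneckerInvariant (twirl ν X) := by
  intro V hV
  ext p q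
  rw [conjKronecker, twirl, mul_of_integral_mul_apply (integrable_conjKronecker_apply X)]
  have hmul : ∀ U : unitaryGroup ι ℂ, V ⊗ₖ V * conjKronecker (U : Matrix ι ι ℂ) X * (V ⊗ₖ V)ᴴ =
      conjKronecker ((⟨V, hV⟩ * U : unitaryGroup ι ℂ) : Matrix ι ι ℂ) X := fun U => by
    rw [Submonoid.coe_mul, conjKronecker_mul]
    rfl
  simp only [hmul]
  conv_rhs => rw [of_apply, ← hinv ⟨V, hV⟩]
  rw [integral_map (continuous_const_mul _).measurable.aemeasurable
    ((continuous_conjKronecker X).matrix_elem p q).aestronglyMeasurable]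

theorem trace_twirl_mul (W : Matrix (ι × ι) (ι × ι) ℂ) :
    (twirl ν X * W).trace =
      ∫ U : unitaryGroup ι ℂ, (conjKronecker (U : Matrix ι ι ℂ) X * W).trace ∂ν := by
  simp only [trace, diag]
  rw [integral_finsetSum _ fun p _ => ((continuous_conjKronecker X).matrix_mul continuous_const
    |>.matrix_elem p p).integrable_of_compactSpace]
  refine Finset.sum_congr rfl fun p _ => ?_
  rw [← Matrix.one_mul (twirl ν X), twirl,
    mul_of_integral_mul_apply (integrable_conjKronecker_apply X)]
  simp only [Matrix.one_mul]

theorem trace_twirl_mul_of_commute [IsProbabilityMeasure ν] {W : Matrix (ι × ι) (ι × ι) ℂ}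
    (hW : ∀ U ∈ unitaryGroup ι ℂ, Commute (U ⊗ₖ U) W) :
    (twirl ν X * W).trace = (X * W).trace := by
  rw [trace_twirl_mul]
  simp only [fun U : unitaryGroup ι ℂ => trace_conjKronecker_mul U.2 (hW U U.2) X,
    integral_const, probReal_univ, one_smul]

theorem twirl_eq_of_map_mul_left [Nontrivial ι] [IsProbabilityMeasure ν]
    (hinv : ∀ g, Measure.map (g * ·) ν = ν) :
    let d : ℂ := Fintype.card ι
    twirl ν X = ((d * X.trace - (X * swapMatrix ι).trace) / (d * (d ^ 2 - 1))) • 1 +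
      ((d * (X * swapMatrix ι).trace - X.trace) / (d * (d ^ 2 - 1))) • swapMatrix ι := by
  intro d
  obtain ⟨e, f, hef⟩ := exists_pair_ne ι
  have hstruct := (isConjKroneckerInvariant_twirl X hinv).eq_smul_one_add_smul_swapMatrix hef
  set Y := twirl ν X (e, f) (e, f)
  set Z := twirl ν X (e, f) (f, e)
  have htrace : Y * d ^ 2 + Z * d = X.trace := by
    have h := trace_twirl_mul_of_commute (ν := ν) X (W := 1) fun U _ => Commute.one_right _
    rw [Matrix.mul_one, Matrix.mul_one, hstruct] at h
    simpa [trace_swapMatrix, d, sq] using h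
  have htrace_swap : Y * d + Z * d ^ 2 = (X * swapMatrix ι).trace := by
    have h := trace_twirl_mul_of_commute (ν := ν) X (W := swapMatrix ι) fun U _ =>
      (swapMatrix_mul_kronecker U U).symm
    rw [hstruct, add_mul, smul_mul, smul_mul, Matrix.one_mul, swapMatrix_mul_self] at h
    simpa [trace_swapMatrix, d, sq] using h
  have hcard : 1 < Fintype.card ι := Fintype.one_lt_card
  have hd0 : d ≠ 0 := by simp [d]
  have hd1 : d ^ 2 - 1 ≠ 0 := by
    rw [sub_ne_zero]
    simp only [d]
    exact_mod_cast (Nat.one_lt_pow two_ne_zero hcard).ne'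
  rw [hstruct]
  congr 2
  · field_simp
    linear_combination d * htrace - htrace_swap
  · field_simp
    linear_combination d * htrace_swap - htrace

end Twirl

instance {n : ℕ} : BorelSpace (Matrix (Qub n) (Qub n) ℂ) := ⟨rfl⟩

theorem twirl_apply_eq_sum_momentMatrix {n : ℕ} (ν : Measure (UGQ n)) [IsFiniteMeasure ν]
    (X : Matrix (Qub n × Qub n) (Qub n × Qub n) ℂ) (p q : Qub n × Qub n) :
    twirl ν X p q = ∑ s, ∑ t, X s t *
      momentMatrix ν 2 (![p.1, p.2], ![q.1, q.2]) (![s.1, s.2], ![t.1, t.2]) := by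
  have hU : ∀ i j, Continuous fun U : UGQ n => (U : Matrix (Qub n) (Qub n) ℂ) i j :=
    fun i j => continuous_subtype_val.matrix_elem i j
  have hint : ∀ s t, Integrable (fun U : UGQ n => (U : Matrix (Qub n) (Qub n) ℂ) p.1 s.1 *
      (U : Matrix (Qub n) (Qub n) ℂ) p.2 s.2 * X s t *
      star ((U : Matrix (Qub n) (Qub n) ℂ) q.1 t.1 * (U : Matrix (Qub n) (Qub n) ℂ) q.2 t.2)) ν :=
    fun s t => Continuous.integrable_of_compactSpace <|
      (((hU _ _).mul (hU _ _)).mul continuous_const).mul ((hU _ _).mul (hU _ _)).star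
  simp only [twirl, of_apply, conjKronecker_apply]
  rw [integral_finsetSum _ fun s _ => integrable_finsetSum _ fun t _ => hint s t]
  refine Finset.sum_congr rfl fun s _ => ?_
  rw [integral_finsetSum _ fun t _ => hint s t]
  refine Finset.sum_congr rfl fun t _ => ?_
  rw [momentMatrix, ← integral_const_mul]
  congr 1
  ext U
  simp only [Fin.prod_univ_two, Matrix.cons_val_zero, Matrix.cons_val_one, Complex.star_def,
    map_mul]
  ring

theorem twirl_congr_of_momentMatrix_eq {n : ℕ} {μ ν : Measure (UGQ n)} [IsFiniteMeasure μ]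
    [IsFiniteMeasure ν] (h : momentMatrix μ 2 = momentMatrix ν 2)
    (X : Matrix (Qub n × Qub n) (Qub n × Qub n) ℂ) : twirl μ X = twirl ν X := by
  ext p q
  simp only [twirl_apply_eq_sum_momentMatrix, h]

theorem sum_pi_fin_succ {n : ℕ} {α M : Type*} [Fintype α] [AddCommMonoid M]
    (f : (Fin (n + 1) → α) → M) : ∑ x, f x = ∑ a, ∑ s, f (Fin.cons a s) := by
  rw [← (Fin.consEquiv fun _ => α).sum_comp, Fintype.sum_prod_type]
  rfl

theorem ptr_apply (m : ℕ) (M : Matrix (Qub (m + 1)) (Qub (m + 1)) ℂ) (a b : Fin 2) :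
    ptr m M a b = ∑ s : Qub m, M (Fin.cons a s) (Fin.cons b s) := by
  rw [ptr, sum_pi_fin_succ, Fin.sum_univ_two]
  simp

def firstQubitSwap (m : ℕ) :
    Matrix (Qub (m + 1) × Qub (m + 1)) (Qub (m + 1) × Qub (m + 1)) ℂ :=
  of fun y x =>
    if y = (Fin.cons (x.2 0) (Fin.tail x.1), Fin.cons (x.1 0) (Fin.tail x.2)) then 1 else 0

theorem trace_mul_firstQubitSwap (m : ℕ)
    (M : Matrix (Qub (m + 1) × Qub (m + 1)) (Qub (m + 1) × Qub (m + 1)) ℂ) :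
    (M * firstQubitSwap m).trace =
      ∑ a, ∑ s, ∑ b, ∑ t, M (Fin.cons a s, Fin.cons b t) (Fin.cons b s, Fin.cons a t) := by
  simp only [trace, diag, mul_apply, firstQubitSwap, of_apply, mul_ite, mul_one, mul_zero,
    Finset.sum_ite_eq', Finset.mem_univ, if_true, Fintype.sum_prod_type, sum_pi_fin_succ,
    Fin.cons_zero, Fin.tail_cons]

theorem trace_ptr_mul_self (m : ℕ) (A : Matrix (Qub (m + 1)) (Qub (m + 1)) ℂ) :
    (ptr m A * ptr m A).trace = (A ⊗ₖ A * firstQubitSwap m).trace := by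
  rw [trace_mul_firstQubitSwap]
  simp only [kroneckerMap_apply, trace, diag, mul_apply, ptr_apply, Finset.sum_mul_sum]
  refine Finset.sum_congr rfl fun a _ => ?_
  rw [Finset.sum_comm]

theorem trace_firstQubitSwap (m : ℕ) : (firstQubitSwap m).trace = 2 * (2 ^ m) ^ 2 := by
  rw [← Matrix.one_mul (firstQubitSwap m), trace_mul_firstQubitSwap]
  simp [one_apply, Fin.cons_inj]
  ring

theorem trace_swapMatrix_mul_firstQubitSwap (m : ℕ) :
    (swapMatrix (Qub (m + 1)) * firstQubitSwap m).trace = 4 * 2 ^ m := by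
  rw [trace_mul_firstQubitSwap]
  simp [Fin.cons_inj, eq_comm]
  ring

theorem integral_trace_ptr_mul_self (m : ℕ) (H : Matrix (Qub (m + 1)) (Qub (m + 1)) ℂ)
    (μ μH : Measure (UGQ (m + 1))) [IsProbabilityMeasure μ] [IsProbabilityMeasure μH]
    (hinv : ∀ g : UGQ (m + 1), Measure.map (g * ·) μH = μH)
    (hdesign : momentMatrix μ 2 = momentMatrix μH 2) :
    let D : ℝ := 2 ^ (m + 1)
    ∫ C : UGQ (m + 1), (ptr m (C.1 * H * star C.1) * ptr m (C.1 * H * star C.1)).trace ∂μ =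
      ((3 / 2 / (D - D⁻¹) : ℝ) : ℂ) * (H * H).trace +
        (((D ^ 2 / 2 - 2) / (D ^ 2 - 1) : ℝ) : ℂ) * H.trace ^ 2 := by
  intro D
  have hswap : ∀ C : Matrix (Qub (m + 1)) (Qub (m + 1)) ℂ,
      (ptr m (C * H * star C) * ptr m (C * H * star C)).trace =
        (conjKronecker C (H ⊗ₖ H) * firstQubitSwap m).trace := fun C => by
    rw [trace_ptr_mul_self, conjKronecker, conjTranspose_kronecker, ← mul_kronecker_mul,
      ← mul_kronecker_mul, star_eq_conjTranspose]
  simp only [hswap]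
  rw [← trace_twirl_mul, twirl_congr_of_momentMatrix_eq hdesign, twirl_eq_of_map_mul_left _ hinv]
  simp only [add_mul, smul_mul, Matrix.one_mul, trace_add, trace_smul, trace_firstQubitSwap,
    trace_swapMatrix_mul_firstQubitSwap, trace_kronecker, trace_kronecker_mul_swapMatrix,
    Fintype.card_fun, Fintype.card_fin, smul_eq_mul]
  have hD : (2 : ℝ) ≤ D := le_self_pow₀ one_le_two (Nat.succ_ne_zero m)
  have hD0 : (D : ℂ) ≠ 0 := by exact_mod_cast (by positivity : D ≠ 0)
  have hD1 : (D : ℂ) ^ 2 - 1 ≠ 0 := by exact_mod_cast (by nlinarith : D ^ 2 - 1 ≠ 0)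
  have hD2 : (D : ℂ) - (D : ℂ)⁻¹ ≠ 0 := by
    rw [sub_ne_zero]
    intro h
    field_simp at h
    exact hD1 (by linear_combination h)
  have hDc : (2 : ℂ) ^ (m + 1) = D := by simp [D]
  have hNc : (2 : ℂ) ^ m = D / 2 := by rw [← hDc, pow_succ]; ring
  push_cast
  rw [hDc, hNc]
  field_simp
  ring

theorem Matrix.IsHermitian.re_trace_sq_nonneg {n : Type*} [Fintype n] {H : Matrix n n ℂ}
    (hH : H.IsHermitian) : 0 ≤ (H.trace ^ 2).re := by
  have hconj : star H.trace = H.trace := by rw [← trace_conjTranspose, hH.eq]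
  rw [← Complex.conj_eq_iff_re.mp hconj, ← Complex.ofReal_pow, Complex.ofReal_re]
  positivity

theorem stmt4_general (m : ℕ) (H : Matrix (Qub (m + 1)) (Qub (m + 1)) ℂ) (hH : H.IsHermitian)
    (μ μH : Measure (UGQ (m + 1))) [IsProbabilityMeasure μ] [IsProbabilityMeasure μH]
    (hinv : ∀ g : UGQ (m + 1), Measure.map (fun x => g * x) μH = μH)
    (hdesign : momentMatrix μ 2 = momentMatrix μH 2) :
    ((3 / 2) / ((2 : ℝ) ^ (m + 1) - ((2 : ℝ) ^ (m + 1))⁻¹)) * ((H * H).trace).re ≤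
      (∫ C : UGQ (m + 1),
        ((ptr m ((C : Matrix (Qub (m + 1)) (Qub (m + 1)) ℂ) * H *
            star (C : Matrix (Qub (m + 1)) (Qub (m + 1)) ℂ)) *
          ptr m ((C : Matrix (Qub (m + 1)) (Qub (m + 1)) ℂ) * H *
            star (C : Matrix (Qub (m + 1)) (Qub (m + 1)) ℂ))).trace) ∂μ).re := by
  rw [integral_trace_ptr_mul_self m H μ μH hinv hdesign, Complex.add_re, Complex.re_ofReal_mul,
    Complex.re_ofReal_mul, le_add_iff_nonneg_right]
  have hD : (2 : ℝ) ≤ 2 ^ (m + 1) := le_self_pow₀ one_le_two (Nat.succ_ne_zero m)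
  exact mul_nonneg (div_nonneg (by nlinarith) (by nlinarith)) hH.re_trace_sq_nonneg

/-- If `μ` is an exact unitary 2-design on `n = m+1` qubits, then for every Hermitian `H`
with `Tr(H²) ≤ 1`,
`E_{C∼μ} Tr((Tr_{[2,n]}(C H C†))²) ≥ ((3/2)/(2^n − 2^{−n})) Tr(H²)`. -/
theorem stmt4 (m : ℕ) (H : Matrix (Qub (m + 1)) (Qub (m + 1)) ℂ) (hH : H.IsHermitian)
    (htr : ((H * H).trace).re ≤ 1)
    (μ μH : Measure (UGQ (m + 1))) [IsProbabilityMeasure μ] [IsProbabilityMeasure μH]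
    (hinv : ∀ g : UGQ (m + 1), Measure.map (fun x => g * x) μH = μH)
    (hdesign : momentMatrix μ 2 = momentMatrix μH 2) :
    ((3 / 2) / ((2 : ℝ) ^ (m + 1) - ((2 : ℝ) ^ (m + 1))⁻¹)) * ((H * H).trace).re ≤
      (∫ C : UGQ (m + 1),
        ((ptr m ((C : Matrix (Qub (m + 1)) (Qub (m + 1)) ℂ) * H *
            star (C : Matrix (Qub (m + 1)) (Qub (m + 1)) ℂ)) *
          ptr m ((C : Matrix (Qub (m + 1)) (Qub (m + 1)) ℂ) * H *
            star (C : Matrix (Qub (m + 1)) (Qub (m + 1)) ℂ))).trace) ∂μ).re :=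
  stmt4_general m H hH μ μH hinv hdesign
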